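/- For any endomorphism A of a vector space U over ℚ, the operator D^A(z) = exp(Σ_{i≥1} (zⁱ/i) δ(Aⁱ)) on the exterior algebra ⋀U, where δ(B) denotes the unique derivation of ⋀U restricting to B on U, is a Hasse–Schmidt derivation: D^A(z)(u ∧ v) = D^A(z)u ∧ D^A(z)v for all u, v ∈ ⋀U, and moreover D^A(z)u = Σ_{i≥0} (Aⁱu) zⁱ for u ∈ U. -/

import Mathlib

open MvPolynomial
open scoped Classical

/-- `S n` : coefficients of `exp(∑ xᵢ tⁱ)`. -/
noncomputable def S : ℕ → MvPolynomial ℕ ℚ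
  | 0 => 1
  | (n+1) => ((n+1 : ℚ))⁻¹ •
      ∑ i ∈ Finset.range (n+1), ((i+1 : ℚ)) • (X (i+1) * S (n - i))
  decreasing_by exact Nat.lt_succ_of_le (Nat.sub_le n i)

noncomputable def Sint (m : ℤ) : MvPolynomial ℕ ℚ :=
  if 0 ≤ m then S m.toNat else 0

noncomputable def SchurPoly (μ : YoungDiagram) : MvPolynomial ℕ ℚ :=
  Matrix.det (Matrix.of fun i j : Fin (μ.colLen 0) =>
    Sint ((μ.rowLen j : ℤ) - (j : ℤ) + (i : ℤ)))

/-- number of standard Young tableaux of shape μ -/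
noncomputable def fSYT (μ : YoungDiagram) : ℕ :=
  Set.ncard {T : {c // c ∈ μ.cells} ≃ Fin μ.card |
    ∀ c d : {c // c ∈ μ.cells}, (c : ℕ × ℕ).1 ≤ (d : ℕ × ℕ).1 →
      (c : ℕ × ℕ).2 ≤ (d : ℕ × ℕ).2 → c ≠ d → T c < T d}

def toYD {n : ℕ} (p : n.Partition) : YoungDiagram :=
  YoungDiagram.ofRowLens (p.parts.sort (· ≥ ·)) (List.Pairwise.sortedGE (p.parts.pairwise_sort _))

noncomputable def einv (m : ℤ) : ℚ :=
  if 0 ≤ m then ((Nat.factorial m.toNat : ℚ))⁻¹ else 0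

noncomputable def ExpDelta (μ : YoungDiagram) : ℚ :=
  Matrix.det (Matrix.of fun i j : Fin (μ.colLen 0) =>
    einv ((μ.rowLen j : ℤ) - (j : ℤ) + (i : ℤ)))

def hookLen (μ : YoungDiagram) (c : ℕ × ℕ) : ℕ :=
  μ.rowLen c.1 - c.2 + (μ.colLen c.2 - c.1) - 1

noncomputable def hpoly (r m : ℕ) : MvPolynomial (Fin r) ℚ :=
  ∑ f ∈ Finset.univ.filter (fun f : Fin m → Fin r => ∀ i j, i ≤ j → f i ≤ f j),
    ∏ i, X (f i)

noncomputable def hpolyInt (r : ℕ) (m : ℤ) : MvPolynomial (Fin r) ℚ :=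
  if 0 ≤ m then hpoly r m.toNat else 0

noncomputable def sPoly (r : ℕ) (μ : YoungDiagram) : MvPolynomial (Fin r) ℚ :=
  Matrix.det (Matrix.of fun i j : Fin r => hpolyInt r ((μ.rowLen j : ℤ) - (j : ℤ) + (i : ℤ)))

noncomputable def Dop : ℕ → (MvPolynomial ℕ ℚ →ₗ[ℚ] MvPolynomial ℕ ℚ)
  | 0 => LinearMap.id
  | (n+1) => ((n+1 : ℚ))⁻¹ •
      ∑ i ∈ Finset.range (n+1), ((pderiv (i+1)).toLinearMap).comp (Dop (n - i))
  decreasing_by exact Nat.lt_succ_of_le (Nat.sub_le n i)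

noncomputable def Xw (r : ℕ) (μ : YoungDiagram) : ExteriorAlgebra ℚ (Polynomial ℚ) :=
  (List.ofFn fun k : Fin r =>
    ExteriorAlgebra.ι ℚ (Polynomial.X ^ (r - 1 - (k : ℕ) + μ.rowLen k))).prod

section Aux

lemma reidx1 {M : Type*} [AddCommMonoid M] (N : ℕ) (g : ℕ → ℕ → ℕ → M) :
    ∑ m ∈ Finset.range (N+1), ∑ i ∈ Finset.range m, g i (m-1-i) (N-m)
      = ∑ i ∈ Finset.range N, ∑ k ∈ Finset.range (N-i), g i k (N-1-i-k) := by
  rw [Finset.sum_sigma', Finset.sum_sigma']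
  refine Finset.sum_nbij' (fun p => ⟨p.2, p.1 - 1 - p.2⟩) (fun q => ⟨q.1 + q.2 + 1, q.1⟩)
    ?_ ?_ ?_ ?_ ?_ <;> rintro ⟨x, y⟩ h <;>
    simp only [Finset.mem_sigma, Finset.mem_range] at * <;>
    first
      | rfl
      | omega
      | (constructor <;> omega)
      | (congr 1 <;> omega)
      | (congr 2 <;> omega)

lemma reidx2 {M : Type*} [AddCommMonoid M] (N : ℕ) (g : ℕ → ℕ → ℕ → M) :
    ∑ m ∈ Finset.range (N+1), ∑ i ∈ Finset.range (N-m), g i m (N-1-m-i)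
      = ∑ i ∈ Finset.range N, ∑ k ∈ Finset.range (N-i), g i k (N-1-i-k) := by
  rw [Finset.sum_sigma', Finset.sum_sigma']
  refine Finset.sum_nbij' (fun p => ⟨p.2, p.1⟩) (fun q => ⟨q.2, q.1⟩)
    ?_ ?_ ?_ ?_ ?_ <;> rintro ⟨x, y⟩ h <;>
    simp only [Finset.mem_sigma, Finset.mem_range] at * <;>
    first
      | rfl
      | omega
      | (constructor <;> omega)
      | (congr 1 <;> omega)
      | (congr 2 <;> omega)

end Aux

theorem stmt12 (U : Type*) [AddCommGroup U] [Module ℚ U] (A : U →ₗ[ℚ] U)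
    (δ : ℕ → Module.End ℚ (ExteriorAlgebra ℚ U))
    (hLeib : ∀ i (a b : ExteriorAlgebra ℚ U), δ i (a * b) = δ i a * b + a * δ i b)
    (hGen : ∀ i (u : U), δ i (ExteriorAlgebra.ι ℚ u) = ExteriorAlgebra.ι ℚ ((A ^ i) u))
    (D : ℕ → Module.End ℚ (ExteriorAlgebra ℚ U))
    (hD0 : D 0 = 1)
    (hDrec : ∀ n : ℕ, (n + 1 : ℚ) • D (n+1) =
      ∑ i ∈ Finset.range (n+1), (δ (i+1)).comp (D (n - i))) :
    (∀ (j : ℕ) (a b : ExteriorAlgebra ℚ U),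
        D j (a * b) = ∑ i ∈ Finset.range (j+1), D i a * D (j - i) b) ∧
    (∀ (i : ℕ) (u : U), D i (ExteriorAlgebra.ι ℚ u) = ExteriorAlgebra.ι ℚ ((A ^ i) u)) := by
  have hrec : ∀ (m : ℕ) (x : ExteriorAlgebra ℚ U),
      (m : ℚ) • D m x = ∑ i ∈ Finset.range m, δ (i+1) (D (m-1-i) x) := by
    intro m x
    cases m with
    | zero => simp
    | succ n =>
      have := congrArg (fun f : Module.End ℚ (ExteriorAlgebra ℚ U) => f x) (hDrec n)
      simpa [LinearMap.sum_apply, LinearMap.smul_apply, LinearMap.comp_apply] using this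
  constructor
  · intro j
    induction j using Nat.strong_induction_on with
    | _ j IH =>
      intro a b
      cases j with
      | zero => simp [hD0]
      | succ n =>
        have hne : ((n:ℚ) + 1) ≠ 0 := by positivity
        refine smul_right_injective (ExteriorAlgebra ℚ U) hne ?_
        dsimp only
        have key := hrec (n+1) (a * b)
        push_cast at key
        rw [key]
        have step1 : ∀ i ∈ Finset.range (n+1),
            δ (i+1) (D (n-i) (a * b))
              = ∑ k ∈ Finset.range (n-i+1),
                  (δ (i+1) (D k a) * D (n-i-k) b + D k a * δ (i+1) (D (n-i-k) b)) := by
          intro i hi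
          simp only [Finset.mem_range] at hi
          rw [IH (n-i) (by omega) a b, map_sum]
          exact Finset.sum_congr rfl fun k hk => hLeib _ _ _
        rw [Finset.sum_congr rfl step1]
        -- RHS
        rw [Finset.smul_sum]
        have step2 : ∀ m ∈ Finset.range (n+2),
            ((n:ℚ)+1) • (D m a * D (n+1-m) b)
              = (∑ i ∈ Finset.range m, δ (i+1) (D (m-1-i) a)) * D (n+1-m) b
                + D m a * ∑ i ∈ Finset.range (n+1-m), δ (i+1) (D (n+1-m-1-i) b) := by
          intro m hm
          simp only [Finset.mem_range] at hm
          have hsplit : ((n:ℚ)+1) = (m:ℚ) + ((n+1-m : ℕ) : ℚ) := by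
            rw [Nat.cast_sub (by omega)]; push_cast; ring
          rw [hsplit, add_smul, ← smul_mul_assoc, ← mul_smul_comm, hrec m a, hrec (n+1-m) b]
        rw [Finset.sum_congr rfl step2, Finset.sum_add_distrib]
        simp only [Finset.sum_mul, Finset.mul_sum, Finset.sum_add_distrib]
        congr 1
        · have e1 := reidx1 (n+1) (fun i k l => (δ (i+1)) ((D k) a) * (D l) b)
          rw [e1]
          refine Finset.sum_congr rfl fun i hi => ?_
          simp only [Finset.mem_range] at hi
          refine Finset.sum_congr (by congr 1; omega) fun k hk => ?_
          simp only [Finset.mem_range] at hk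
          have h3 : n - i - k = n + 1 - 1 - i - k := by omega
          rw [h3]
        · have e2 := reidx2 (n+1) (fun i m l => (D m) a * (δ (i+1)) ((D l) b))
          have fix : (∑ m ∈ Finset.range (n+2), ∑ i ∈ Finset.range (n+1-m),
                (D m) a * (δ (i+1)) ((D (n+1-m-1-i)) b))
              = ∑ m ∈ Finset.range (n+2), ∑ i ∈ Finset.range (n+1-m),
                (D m) a * (δ (i+1)) ((D (n+1-1-m-i)) b) := by
            refine Finset.sum_congr rfl fun m hm => Finset.sum_congr rfl fun i hi => ?_
            have : n+1-m-1-i = n+1-1-m-i := by omega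
            rw [this]
          rw [fix, e2]
          refine Finset.sum_congr rfl fun i hi => ?_
          simp only [Finset.mem_range] at hi
          refine Finset.sum_congr (by congr 1; omega) fun k hk => ?_
          simp only [Finset.mem_range] at hk
          have h3 : n - i - k = n + 1 - 1 - i - k := by omega
          rw [h3]
  · intro i
    induction i using Nat.strong_induction_on with
    | _ i IH =>
      intro u
      cases i with
      | zero => simp [hD0]
      | succ n =>
        have hne : ((n:ℚ) + 1) ≠ 0 := by positivity
        refine smul_right_injective (ExteriorAlgebra ℚ U) hne ?_
        dsimp only
        have key := hrec (n+1) (ExteriorAlgebra.ι ℚ u)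
        push_cast at key
        rw [key]
        have : ∀ k ∈ Finset.range (n+1),
            δ (k+1) (D (n-k) (ExteriorAlgebra.ι ℚ u))
              = ExteriorAlgebra.ι ℚ ((A ^ (n+1)) u) := by
          intro k hk
          simp only [Finset.mem_range] at hk
          rw [IH (n-k) (by omega) u, hGen]
          rw [← Module.End.mul_apply, ← pow_add]
          have h2 : k+1+(n-k) = n+1 := by omega
          rw [h2]
        rw [Finset.sum_congr rfl this, Finset.sum_const, Finset.card_range]
        rw [← Nat.cast_smul_eq_nsmul ℚ]
        push_cast
        ring_nf
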